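/- arXiv:2405.03897 — 11 statements merged into one kernel-verified Lean document; each statement's English description precedes it below -/
import Mathlib

section
/- Let (I, T) be a paracyclic object. Then there exist a natural number ℓ ≥ 1 and an order isomorphism e : ℤ ≃o I such that e (k + ℓ) = T (e k) for every integer k. (Every object of the paracyclic category is isomorphic to (1/ℓ)ℤ with its translation action, for some ℓ ≥ 1.) -/
/-!
A linear order with finite closed intervals and no endpoints is isomorphic to `ℤ` (the successor
structure is locally finite and Archimedean). Transporting `T` along such an isomorphism gives an
order automorphism of `ℤ`; it preserves successors, so it is a translation `k ↦ k + ℓ`, and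
`i < T i` forces `ℓ ≥ 1`.
-/

theorem OrderIso.int_map_add_one (g : ℤ ≃o ℤ) (k : ℤ) : g (k + 1) = g k + 1 := by
  simpa only [Order.succ_eq_add_one, OrderIso.toInitialSeg_toFun] using g.toInitialSeg.map_succ k

theorem OrderIso.int_apply_eq_add_apply_zero (g : ℤ ≃o ℤ) (k : ℤ) : g k = k + g 0 := by
  induction k using Int.induction_on with
  | zero => ring
  | succ n ih => rw [g.int_map_add_one, ih]; ring
  | pred n ih =>
    have h := g.int_map_add_one (-n - 1)
    rw [sub_add_cancel] at h
    linarith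

theorem nonempty_orderIso_int_of_finite_Icc {I : Type*} [LinearOrder I] [Nonempty I]
    [NoMaxOrder I] [NoMinOrder I] (hfin : ∀ i j : I, (Set.Icc i j).Finite) :
    Nonempty (ℤ ≃o I) :=
  letI : LocallyFiniteOrder I := LocallyFiniteOrder.ofFiniteIcc hfin
  letI : SuccOrder I := LinearLocallyFiniteOrder.succOrder I
  letI : PredOrder I := LinearLocallyFiniteOrder.predOrder I
  ⟨orderIsoIntOfLinearSuccPredArch.symm⟩

theorem OrderIso.exists_apply_add_eq_of_lt_apply {I : Type*} [LinearOrder I] (e : ℤ ≃o I)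
    (T : I ≃o I) (hT : ∀ i : I, i < T i) :
    ∃ ℓ : ℕ, 1 ≤ ℓ ∧ ∀ k : ℤ, e (k + (ℓ : ℤ)) = T (e k) := by
  set g : ℤ ≃o ℤ := (e.trans T).trans e.symm
  have hg : ∀ k, e (g k) = T (e k) := fun k => e.apply_symm_apply _
  have hpos : 0 < g 0 := e.lt_iff_lt.mp (by simpa only [hg] using hT (e 0))
  refine ⟨(g 0).toNat, by omega, fun k => ?_⟩
  rw [← hg, g.int_apply_eq_add_apply_zero k, Int.toNat_of_nonneg hpos.le]

/-- Every paracyclic object `(I, T)` — a nonempty linear order `I` in which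
every closed interval is finite, together with an order automorphism `T` with `i < T i` for
all `i` — is isomorphic to `(1/ℓ)ℤ` with its translation action for some `ℓ ≥ 1`: there is an
order isomorphism `e : ℤ ≃o I` intertwining translation by `ℓ` with `T`. -/
theorem stmt_0 {I : Type*} [LinearOrder I] [Nonempty I]
    (hfin : ∀ i j : I, (Set.Icc i j).Finite)
    (T : I ≃o I) (hT : ∀ i : I, i < T i) :
    ∃ ℓ : ℕ, 1 ≤ ℓ ∧ ∃ e : ℤ ≃o I, ∀ k : ℤ, e (k + (ℓ : ℤ)) = T (e k) := by
  have : NoMaxOrder I := ⟨fun i => ⟨T i, hT i⟩⟩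
  have : NoMinOrder I := ⟨fun i => ⟨T.symm i, by simpa using hT (T.symm i)⟩⟩
  obtain ⟨e⟩ := nonempty_orderIso_int_of_finite_Icc hfin
  obtain ⟨ℓ, hℓ, he⟩ := e.exists_apply_add_eq_of_lt_apply T hT
  exact ⟨ℓ, hℓ, e, he⟩
end

section
/- Let (I, T) be a paracyclic object, and let D be the set of monotone surjections f : I → Fin 2, ordered pointwise. Then: (a) D is nonempty; (b) the pointwise order on D is linear (any two elements are comparable); (c) every closed interval in D is finite; and (d) the map S : D → D defined by S f = f ∘ T is a well-defined order-preserving bijection of D satisfying f < S f for every f ∈ D. In particular (D, S) is again a paracyclic object (the dual paracyclic object of (I, T)). -/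
lemma stmt2_aux_exceed {I : Type*} [LinearOrder I]
    (hfin : ∀ i j : I, (Set.Icc i j).Finite)
    (T : I ≃o I) (hT : ∀ i : I, i < T i) (a b : I) :
    ∃ n : ℕ, b < T^[n] a := by
  by_contra h
  push_neg at h
  have hsm : StrictMono (fun n : ℕ => T^[n] a) := by
    apply strictMono_nat_of_lt_succ
    intro n
    simp only [Function.iterate_succ_apply']
    exact hT _
  have hmem : ∀ n : ℕ, T^[n] a ∈ Set.Icc a b := by
    intro n
    refine ⟨?_, h n⟩
    have := hsm.le_iff_le (a := 0) (b := n)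
    calc a = T^[0] a := rfl
      _ ≤ T^[n] a := hsm.monotone (Nat.zero_le n)
  exact (Set.infinite_of_injective_forall_mem hsm.injective hmem) (hfin a b)

/-- For a paracyclic object `(I, T)`, the set `D` of monotone surjections
`I → Fin 2` (ordered pointwise) is nonempty, linearly ordered, has finite closed intervals,
and the map `S : D → D`, `S f = f ∘ T`, is a well-defined order-preserving bijection with
`f < S f` for all `f`.  Thus `(D, S)` is again a paracyclic object, the dual of `(I, T)`. -/
theorem stmt_2 {I : Type*} [LinearOrder I] [Nonempty I]
    (hfin : ∀ i j : I, (Set.Icc i j).Finite)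
    (T : I ≃o I) (hT : ∀ i : I, i < T i) :
    Nonempty {f : I → Fin 2 // Monotone f ∧ Function.Surjective f} ∧
    (∀ f g : {f : I → Fin 2 // Monotone f ∧ Function.Surjective f}, f ≤ g ∨ g ≤ f) ∧
    (∀ f g : {f : I → Fin 2 // Monotone f ∧ Function.Surjective f}, (Set.Icc f g).Finite) ∧
    ∃ S : {f : I → Fin 2 // Monotone f ∧ Function.Surjective f} →
        {f : I → Fin 2 // Monotone f ∧ Function.Surjective f},
      (∀ f, (S f : I → Fin 2) = (f : I → Fin 2) ∘ T) ∧
      Function.Bijective S ∧ Monotone S ∧ ∀ f, f < S f := by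
  -- basic facts about Fin 2
  have le0 : ∀ x : Fin 2, x ≤ 0 → x = 0 := by decide
  have ge1 : ∀ x : Fin 2, 1 ≤ x → x = 1 := by decide
  refine ⟨?_, ?_, ?_, ?_⟩
  · -- nonempty
    obtain ⟨i₀⟩ := ‹Nonempty I›
    refine ⟨⟨fun i => if i ≤ i₀ then 0 else 1, ?_, ?_⟩⟩
    · intro i j hij
      dsimp only
      split_ifs with h1 h2 h3
      · exact le_refl _
      · exact Fin.zero_le _
      · exact absurd (le_trans hij h3) h1
      · exact le_refl _
    · intro y
      fin_cases y
      · exact ⟨i₀, by simp⟩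
      · exact ⟨T i₀, by simp [not_le.2 (hT i₀)]⟩
  · -- linear
    intro f g
    by_cases h : f ≤ g
    · exact Or.inl h
    · right
      have h' : ¬ ∀ i, f.1 i ≤ g.1 i := h
      push_neg at h'
      obtain ⟨i, hi⟩ := h'
      have pair : ∀ x y : Fin 2, x < y → y = 1 ∧ x = 0 := by decide
      obtain ⟨hfi, hgi⟩ := pair _ _ hi
      intro j
      rcases le_total j i with hj | hj
      · calc g.1 j ≤ g.1 i := g.2.1 hj
          _ = 0 := hgi
          _ ≤ f.1 j := Fin.zero_le _
      · calc g.1 j ≤ 1 := Fin.le_last _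
          _ = f.1 i := hfi.symm
          _ ≤ f.1 j := f.2.1 hj
  · -- finite intervals
    intro f g
    rcases Set.eq_empty_or_nonempty (Set.Icc f g) with he | ⟨h₀, hh₀⟩
    · rw [he]; exact Set.finite_empty
    · obtain ⟨a, ha⟩ := g.2.2 0
      obtain ⟨b, hb⟩ := f.2.2 1
      have : Finite (Set.Icc a b) := (hfin a b).to_subtype
      suffices hinj : Function.Injective
          (fun h : Set.Icc f g => fun i : Set.Icc a b => h.1.1 i.1) by
        have : Finite (Set.Icc f g) := Finite.of_injective _ hinj
        exact Set.toFinite _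
      intro h₁ h₂ heq
      have key : ∀ h : Set.Icc f g, ∀ i : I, i ∉ Set.Icc a b → h.1.1 i = if i < a then 0 else 1 := by
        intro h i hi
        rcases h.2 with ⟨hfh, hhg⟩
        rw [Set.mem_Icc, not_and_or, not_le, not_le] at hi
        rcases hi with hi | hi
        · rw [if_pos hi]
          refine le0 _ ?_
          calc h.1.1 i ≤ h.1.1 a := h.1.2.1 hi.le
            _ ≤ g.1 a := hhg a
            _ = 0 := ha
        · have hab : ¬ i < a := by
            intro hia
            have : f.1 b ≤ f.1 i := f.2.1 hi.le
            have : (1 : Fin 2) ≤ f.1 i := hb ▸ this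
            have h1 : f.1 i = 1 := ge1 _ this
            have : f.1 i ≤ f.1 a := f.2.1 hia.le
            have : f.1 a ≤ h.1.1 a := hfh a
            have : h.1.1 a ≤ g.1 a := hhg a
            -- f i = 1 and i < a ≤ ... contradiction via g a = 0
            have h2 : f.1 i ≤ g.1 a := le_trans (f.2.1 hia.le) (le_trans (hfh a) (hhg a))
            rw [h1, ha] at h2
            exact absurd h2 (by decide)
          rw [if_neg hab]
          refine ge1 _ ?_
          calc (1 : Fin 2) = f.1 b := hb.symm
            _ ≤ f.1 i := f.2.1 hi.le
            _ ≤ h.1.1 i := hfh i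
      apply Subtype.ext
      apply Subtype.ext
      funext i
      by_cases hi : i ∈ Set.Icc a b
      · exact congrFun heq ⟨i, hi⟩
      · rw [key h₁ i hi, key h₂ i hi]
  · -- the shift S
    have mk : ∀ f : {f : I → Fin 2 // Monotone f ∧ Function.Surjective f},
        Monotone ((f : I → Fin 2) ∘ T) ∧ Function.Surjective ((f : I → Fin 2) ∘ T) :=
      fun f => ⟨f.2.1.comp T.monotone, f.2.2.comp T.surjective⟩
    refine ⟨fun f => ⟨(f : I → Fin 2) ∘ T, mk f⟩, fun f => rfl, ?_, ?_, ?_⟩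
    · -- bijective
      refine Function.bijective_iff_has_inverse.2
        ⟨fun f => ⟨(f : I → Fin 2) ∘ T.symm,
          f.2.1.comp T.symm.monotone, f.2.2.comp T.symm.surjective⟩, ?_, ?_⟩
      · intro f; apply Subtype.ext; funext i
        simp [Function.comp]
      · intro f; apply Subtype.ext; funext i
        simp [Function.comp]
    · -- monotone
      intro f g hfg i
      exact hfg (T i)
    · -- f < S f
      intro f
      have hle : f ≤ ⟨(f : I → Fin 2) ∘ T, mk f⟩ := by
        intro i
        exact f.2.1 (hT i).le
      refine lt_of_le_of_ne hle ?_
      intro hEq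
      have hEq' : (f : I → Fin 2) = (f : I → Fin 2) ∘ T := congrArg Subtype.val hEq
      have hiter : ∀ n : ℕ, ∀ i : I, f.1 (T^[n] i) = f.1 i := by
        intro n
        induction n with
        | zero => intro i; rfl
        | succ n ih =>
          intro i
          rw [Function.iterate_succ_apply]
          calc f.1 (T^[n] (T i)) = f.1 (T i) := ih (T i)
            _ = ((f : I → Fin 2) ∘ T) i := rfl
            _ = f.1 i := (congrFun hEq' i).symm
      obtain ⟨a, ha⟩ := f.2.2 0
      obtain ⟨b, hb⟩ := f.2.2 1
      obtain ⟨n, hn⟩ := stmt2_aux_exceed hfin T hT a b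
      have h1 : f.1 (T^[n] a) = 0 := by rw [hiter n a, ha]
      have h2 : (1 : Fin 2) ≤ f.1 (T^[n] a) := by
        calc (1 : Fin 2) = f.1 b := hb.symm
          _ ≤ f.1 (T^[n] a) := f.2.1 hn.le
      rw [h1] at h2
      exact absurd h2 (by decide)
end

section
/- For p : ℕ, let A_p be the linear quiver on Fin (p+1) having, for each i : Fin p, exactly one arrow from i.castSucc to i.succ, and no other arrows. Then the canonical functor from the free category Paths A_p to the preorder category on Fin (p+1), sending each generating arrow to the unique morphism witnessing i.castSucc ≤ i.succ, is bijective on objects and fully faithful; in particular it is an equivalence of categories. (The simplex category is the full subcategory of Cat on the free categories of finite nonempty linearly-directed graphs.) -/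
open CategoryTheory

/-- The linear quiver on `Fin (p+1)`: one arrow `i.castSucc ⟶ i.succ` for each `i : Fin p`,
and no other arrows. -/
def LinQ (p : ℕ) : Type := Fin (p + 1)

instance (p : ℕ) : Quiver (LinQ p) :=
  ⟨fun a b => { i : Fin p // a = i.castSucc ∧ b = i.succ }⟩

/-- The canonical functor from the free category on the linear quiver to the preorder category
on `Fin (p+1)`, sending each generating arrow to the unique morphism witnessing
`i.castSucc ≤ i.succ`. -/
def linQToFin (p : ℕ) : Paths (LinQ p) ⥤ Fin (p + 1) :=
  Paths.lift
    { obj := fun a => (a : Fin (p + 1))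
      map := fun {a b} e => homOfLE (by
        obtain ⟨i, ha, hb⟩ := e
        subst ha; subst hb
        exact (Fin.castSucc_lt_succ (i := i)).le) }

/-!
A path from `a` to `b` in the linear quiver has length `b - a`, and its last arrow is the only
arrow into `b`; hence there is at most one path from `a` to `b`, and climbing one arrow at a time
shows there is one exactly when `a ≤ b`. So the hom-sets of `Paths (LinQ p)` and of `Fin (p + 1)`
are both subsingletons, inhabited under the same condition, and the identity on objects is an
equivalence.
-/

namespace LinQ

variable {p : ℕ}

/-- Vertices are moved to `Fin (p + 1)` through this explicit equivalence: `Fin (p + 1)` carries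
its own quiver (from the preorder category), which would otherwise be picked up for paths. -/
def toFin : LinQ p ≃ Fin (p + 1) := Equiv.refl _

theorem val_add_length {a b : LinQ p} (e : Quiver.Path a b) :
    (toFin a).val + e.length = (toFin b).val := by
  induction e with
  | nil => rfl
  | @cons c d e' g ih =>
    have hc : (toFin c).val = g.1.val := congrArg Fin.val g.2.1
    have hd : (toFin d).val = g.1.val + 1 := congrArg Fin.val g.2.2
    rw [Quiver.Path.length_cons]
    omega

theorem length_eq_length {a b : LinQ p} (e f : Quiver.Path a b) : e.length = f.length := by
  have := val_add_length e
  have := val_add_length f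
  omega

instance path_subsingleton (a b : LinQ p) : Subsingleton (Quiver.Path a b) := by
  refine ⟨fun e f => ?_⟩
  induction e with
  | nil => exact (f.eq_nil_of_length_zero (length_eq_length .nil f).symm).symm
  | cons e' g ih =>
    cases f with
    | nil => exact absurd (length_eq_length (e'.cons g) .nil) (Nat.succ_ne_zero _)
    | cons f' h =>
      obtain ⟨i, rfl, hi⟩ := g
      obtain ⟨j, rfl, hj⟩ := h
      obtain rfl : i = j := Fin.succ_injective _ (hi.symm.trans hj)
      rw [ih f']

theorem nonempty_path_of_le {a b : LinQ p} (h : toFin a ≤ toFin b) : Nonempty (Quiver.Path a b) := by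
  obtain ⟨b, rfl⟩ := toFin.symm.surjective b
  rw [Equiv.apply_symm_apply] at h
  induction b using Fin.induction with
  | zero =>
    obtain rfl : a = toFin.symm 0 := toFin.eq_symm_apply.mpr (Fin.le_zero_iff.mp h)
    exact ⟨.nil⟩
  | succ j ih =>
    rcases h.eq_or_lt with h | h
    · rw [← h, Equiv.symm_apply_apply]; exact ⟨.nil⟩
    · obtain ⟨e⟩ := ih (Fin.le_castSucc_iff.mpr h)
      exact ⟨e.cons ⟨j, rfl, rfl⟩⟩

end LinQ

/-- The canonical functor from the free category on the linear quiver with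
`p+1` vertices to the preorder category on `Fin (p+1)` is bijective on objects and fully
faithful; in particular it is an equivalence of categories. -/
theorem stmt_3 (p : ℕ) :
    Function.Bijective (linQToFin p).obj ∧
    (linQToFin p).Full ∧ (linQToFin p).Faithful ∧ (linQToFin p).IsEquivalence := by
  have full : (linQToFin p).Full :=
    ⟨fun f => ⟨(LinQ.nonempty_path_of_le (leOfHom f)).some, Subsingleton.elim _ _⟩⟩
  have faithful : (linQToFin p).Faithful :=
    ⟨fun {_ _} e f _ => (LinQ.path_subsingleton _ _).elim e f⟩
  have essSurj : (linQToFin p).EssSurj := ⟨fun b => ⟨LinQ.toFin.symm b, ⟨Iso.refl _⟩⟩⟩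
  exact ⟨Function.bijective_id, full, faithful, { }⟩
end

section
/- Let V and W be quivers. If the free categories Paths V and Paths W are equivalent as categories, then V and W are isomorphic as quivers: there exists a prefunctor from V to W that is bijective on vertices and induces a bijection from the arrows a ⟶ b of V to the arrows φ a ⟶ φ b of W for all vertices a, b. (The free category construction is a monomorphism from directed graphs into categories, bijective on isomorphism classes.) -/
/-!
Length is additive in a free category and identities have length zero, so every isomorphism of
`Paths V` is an identity. Hence an equivalence `F : Paths V ⥤ Paths W` with inverse `G` is a
bijection on objects, and `G (F p)` has the length of `p`. Since `G` sends identities to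
identities, `F` never sends an arrow to an identity, so `F` does not shorten paths, and likewise
`G`; therefore `F` preserves length. Arrows are exactly the paths of length one, and `F` is fully
faithful, so `F` restricts to a bijection on arrows.
-/

open CategoryTheory Quiver

namespace Quiver

variable {V : Type*} [Quiver V] {a b : V}

lemma Hom.toPath_injective : Function.Injective (Hom.toPath : (a ⟶ b) → Path a b) :=
  fun _ _ h => by injection h

lemma Path.length_eq_one_iff (p : Path a b) : p.length = 1 ↔ ∃ f : a ⟶ b, p = f.toPath := by
  refine ⟨fun h => ?_, fun ⟨f, hf⟩ => hf ▸ rfl⟩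
  rcases p with _ | ⟨_ | _, f⟩
  · simp at h
  · exact ⟨f, rfl⟩
  · simp at h

end Quiver

namespace CategoryTheory.Paths

variable {V W : Type*} [Quiver V] [Quiver W]

lemma length_comp {a b c : Paths V} (p : a ⟶ b) (q : b ⟶ c) :
    (p ≫ q).length = p.length + q.length :=
  Path.length_comp p q

lemma length_map_eq_zero (F : Paths V ⥤ Paths W) {a b : Paths V} (p : a ⟶ b)
    (h : p.length = 0) : (F.map p).length = 0 := by
  obtain rfl := Path.eq_of_length_zero p h
  obtain rfl : p = 𝟙 a := Path.eq_nil_of_length_zero p h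
  rw [F.map_id]
  rfl

lemma length_hom_eq_zero {a b : Paths V} (i : a ≅ b) : i.hom.length = 0 := by
  have h := congrArg Path.length i.hom_inv_id
  rw [length_comp] at h
  change _ = 0 at h
  omega

lemma eq_of_iso {a b : Paths V} (i : a ≅ b) : a = b :=
  Path.eq_of_length_zero (V := V) _ (length_hom_eq_zero i)

lemma length_le_length_map (F : Paths V ⥤ Paths W)
    (hF : ∀ {a b : V} (f : a ⟶ b), (F.map ((of V).map f)).length ≠ 0)
    {a b : Paths V} (p : a ⟶ b) : p.length ≤ (F.map p).length := by
  induction p using Paths.induction with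
  | id => exact Nat.zero_le _
  | comp p f ih =>
    have hf := hF f
    rw [F.map_comp, length_comp, length_comp]
    change _ + 1 ≤ _
    omega

lemma length_inverse_map_functor_map (e : Paths V ≌ Paths W) {a b : Paths V} (p : a ⟶ b) :
    (e.inverse.map (e.functor.map p)).length = p.length := by
  have h := congrArg Path.length (e.unitIso.hom.naturality p)
  simp only [Functor.id_map, Functor.comp_map, length_comp] at h
  have ha := length_hom_eq_zero (e.unitIso.app a)
  have hb := length_hom_eq_zero (e.unitIso.app b)
  simp only [Iso.app_hom] at ha hb
  omega

lemma length_functor_map_ne_zero (e : Paths V ≌ Paths W) {a b : V} (f : a ⟶ b) :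
    (e.functor.map ((of V).map f)).length ≠ 0 := fun h => by
  have h₁ := length_inverse_map_functor_map e ((of V).map f)
  rw [length_map_eq_zero e.inverse _ h] at h₁
  exact zero_ne_one (h₁.trans (Path.length_toPath f))

lemma length_functor_map (e : Paths V ≌ Paths W) {a b : Paths V} (p : a ⟶ b) :
    (e.functor.map p).length = p.length := by
  have h₁ := length_le_length_map e.functor (length_functor_map_ne_zero e) p
  have h₂ := length_le_length_map e.inverse (length_functor_map_ne_zero e.symm) (e.functor.map p)
  rw [length_inverse_map_functor_map] at h₂
  omega

lemma bijective_functor_obj (e : Paths V ≌ Paths W) : Function.Bijective e.functor.obj :=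
  Function.bijective_iff_has_inverse.2
    ⟨e.inverse.obj, fun a => (eq_of_iso (e.unitIso.app a)).symm,
      fun b => eq_of_iso (e.counitIso.app b)⟩

section LengthPreserving

variable (F : Paths V ⥤ Paths W) (hF : ∀ {a b : Paths V} (p : a ⟶ b), (F.map p).length = p.length)

noncomputable def toPrefunctor : V ⥤q W where
  obj := F.obj
  map f := ((Path.length_eq_one_iff (F.map ((of V).map f))).1 (hF _)).choose

lemma toPath_toPrefunctor_map {a b : V} (f : a ⟶ b) :
    ((toPrefunctor F hF).map f).toPath = F.map ((of V).map f) :=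
  ((Path.length_eq_one_iff (F.map ((of V).map f))).1 (hF _)).choose_spec.symm

lemma bijective_toPrefunctor_map [F.Full] [F.Faithful] (a b : V) :
    Function.Bijective ((toPrefunctor F hF).map : (a ⟶ b) → _) := by
  constructor
  · intro f g h
    have h' := congrArg Hom.toPath h
    rw [toPath_toPrefunctor_map, toPath_toPrefunctor_map] at h'
    exact Hom.toPath_injective (F.map_injective h')
  · intro w
    obtain ⟨p, hp⟩ := F.map_surjective (X := (of V).obj a) (Y := (of V).obj b) w.toPath
    obtain ⟨f, rfl⟩ := (Path.length_eq_one_iff p).1 ((hF p).symm.trans (congrArg Path.length hp))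
    exact ⟨f, Hom.toPath_injective ((toPath_toPrefunctor_map F hF f).trans hp)⟩

end LengthPreserving

end CategoryTheory.Paths

/-- If the free categories on two quivers are equivalent as categories,
then the quivers are isomorphic: there is a prefunctor that is bijective on vertices and
bijective on each set of arrows. -/
theorem stmt_5 {V : Type*} {W : Type*} [Quiver V] [Quiver W]
    (e : Paths V ≌ Paths W) :
    ∃ φ : V ⥤q W, Function.Bijective φ.obj ∧
      ∀ a b : V, Function.Bijective (fun f : a ⟶ b => φ.map f) :=
  ⟨Paths.toPrefunctor e.functor (Paths.length_functor_map e), Paths.bijective_functor_obj e,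
    Paths.bijective_toPrefunctor_map e.functor (Paths.length_functor_map e)⟩
end

section
/- Let Ξ, Γ, Γ' be quivers, and suppose Ξ is connected: Ξ has at least one vertex, and the equivalence relation on vertices of Ξ generated by 'there exists an arrow from a to b' is total. Let Γ ⊕ Γ' denote the disjoint-union quiver on the sum of the vertex types, with the arrows of Γ between left vertices, the arrows of Γ' between right vertices, and no arrows between the two summands. Then every functor F : Paths Ξ ⥤ Paths (Γ ⊕ Γ') factors through exactly one of the two functors Paths Γ ⥤ Paths (Γ ⊕ Γ') and Paths Γ' ⥤ Paths (Γ ⊕ Γ') induced by the inclusion prefunctors; consequently the set of functors Paths Ξ ⥤ Paths (Γ ⊕ Γ') is in bijection with the disjoint union of the set of functors Paths Ξ ⥤ Paths Γ and the set of functors Paths Ξ ⥤ Paths Γ'. -/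
open CategoryTheory

universe w v u₁ u₂ u₃

variable {Γ : Type u₂} {Γ' : Type u₃}

/-- The disjoint-union quiver on `Γ ⊕ Γ'`: arrows of `Γ` between left vertices, arrows of
`Γ'` between right vertices, and no arrows between the two summands. -/
instance sumQuiver [Quiver.{v} Γ] [Quiver.{v} Γ'] : Quiver.{v} (Γ ⊕ Γ') where
  Hom a b :=
    match a, b with
    | .inl x, .inl y => x ⟶ y
    | .inr x, .inr y => x ⟶ y
    | .inl _, .inr _ => PEmpty.{v + 1}
    | .inr _, .inl _ => PEmpty.{v + 1}

/-- The inclusion prefunctor of the left summand. -/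
def inlPre [Quiver.{v} Γ] [Quiver.{v} Γ'] : Γ ⥤q (Γ ⊕ Γ') where
  obj := Sum.inl
  map e := e

/-- The inclusion prefunctor of the right summand. -/
def inrPre [Quiver.{v} Γ] [Quiver.{v} Γ'] : Γ' ⥤q (Γ ⊕ Γ') where
  obj := Sum.inr
  map e := e

/-- The functor between free categories induced by the left inclusion prefunctor. -/
def inlF [Quiver.{v} Γ] [Quiver.{v} Γ'] : Paths Γ ⥤ Paths (Γ ⊕ Γ') :=
  Paths.lift (inlPre.comp (Paths.of (Γ ⊕ Γ')))

/-- The functor between free categories induced by the right inclusion prefunctor. -/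
def inrF [Quiver.{v} Γ] [Quiver.{v} Γ'] : Paths Γ' ⥤ Paths (Γ ⊕ Γ') :=
  Paths.lift (inrPre.comp (Paths.of (Γ ⊕ Γ')))

/-! A path in `Γ ⊕ Γ'` never changes summand, so when `Ξ` is connected all the objects `F.obj x`
lie in one summand. Each inclusion prefunctor is injective on vertices and bijective on the
arrows leaving any vertex, so by unique path lifting the functor it induces on free categories is
full, faithful and injective on objects. Such a functor can be divided out of every functor
landing in its image, and uniquely; this gives the factorization, and since a nonempty `Ξ` has
an object that cannot be sent to both summands, also its exclusivity and the bijection. -/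

namespace CategoryTheory

section FullyFaithful

variable {C D E : Type*} [Category* C] [Category* D] [Category* E]

theorem Functor.exists_comp_eq_of_full_of_faithful (P : C ⥤ D) [P.Full] [P.Faithful]
    (F : E ⥤ D) (hF : ∀ X, ∃ Y, P.obj Y = F.obj X) : ∃ G : E ⥤ C, G ⋙ P = F := by
  choose o ho using hF
  let G : E ⥤ C :=
    { obj := o
      map := fun {X Y} f => P.preimage (eqToHom (ho X) ≫ F.map f ≫ eqToHom (ho Y).symm)
      map_id := fun X => P.map_injective (by simp)
      map_comp := fun f g => P.map_injective (by simp) }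
  exact ⟨G, Functor.ext ho (fun X Y f => by simp [G])⟩

theorem Functor.comp_left_injective (P : C ⥤ D) [P.Faithful] (hP : Function.Injective P.obj) :
    Function.Injective fun G : E ⥤ C => G ⋙ P := by
  intro G₁ G₂ h
  have hobj : ∀ X, G₁.obj X = G₂.obj X := fun X => hP (Functor.congr_obj h X)
  refine Functor.ext hobj fun X Y f => P.map_injective ?_
  simpa [eqToHom_map] using Functor.congr_hom h f

end FullyFaithful

section FreeMap

variable {V W : Type*} [Quiver V] [Quiver W]

theorem Cat.freeMap_eq_lift (φ : V ⥤q W) : Cat.freeMap φ = Paths.lift (φ ⋙q Paths.of W) :=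
  Paths.lift_unique _ _ rfl

theorem Cat.faithful_freeMap (φ : V ⥤q W) (hφ : ∀ u, Function.Injective (φ.star u)) :
    (Cat.freeMap φ).Faithful where
  map_injective {a b} p q h := by
    have hpq := φ.pathStar_injective hφ a (a₁ := ⟨b, p⟩) (a₂ := ⟨b, q⟩)
      (Sigma.ext rfl (heq_of_eq h))
    exact eq_of_heq (Sigma.mk.inj hpq).2

theorem Cat.full_freeMap (φ : V ⥤q W) (hobj : Function.Injective φ.obj)
    (hφ : ∀ u, Function.Surjective (φ.star u)) :
    (Cat.freeMap φ).Full where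
  map_surjective {a b} p := by
    obtain ⟨⟨c, q⟩, hq⟩ := φ.pathStar_surjective hφ a ⟨φ.obj b, p⟩
    obtain ⟨hc, hqp⟩ := Sigma.mk.inj hq
    obtain rfl := hobj hc
    exact ⟨q, eq_of_heq hqp⟩

end FreeMap

end CategoryTheory

open CategoryTheory

section SumQuiver

variable [Quiver.{v} Γ] [Quiver.{v} Γ']

theorem inlPre_star_bijective (a : Γ) :
    Function.Bijective ((inlPre : Γ ⥤q (Γ ⊕ Γ')).star a) := by
  refine ⟨fun ⟨b, e⟩ ⟨b', e'⟩ h => ?_, fun ⟨w, e⟩ => ?_⟩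
  · obtain ⟨hb, he⟩ := Sigma.mk.inj h
    cases Sum.inl_injective hb
    exact Sigma.ext rfl he
  · cases w with
    | inl b => exact ⟨⟨b, e⟩, rfl⟩
    | inr _ => exact e.elim

theorem inrPre_star_bijective (a : Γ') :
    Function.Bijective ((inrPre : Γ' ⥤q (Γ ⊕ Γ')).star a) := by
  refine ⟨fun ⟨b, e⟩ ⟨b', e'⟩ h => ?_, fun ⟨w, e⟩ => ?_⟩
  · obtain ⟨hb, he⟩ := Sigma.mk.inj h
    cases Sum.inr_injective hb
    exact Sigma.ext rfl he
  · cases w with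
    | inl _ => exact e.elim
    | inr b => exact ⟨⟨b, e⟩, rfl⟩

instance : (inlF : Paths Γ ⥤ Paths (Γ ⊕ Γ')).Full := by
  rw [inlF, ← Cat.freeMap_eq_lift]
  exact Cat.full_freeMap _ Sum.inl_injective fun a => (inlPre_star_bijective a).2

instance : (inlF : Paths Γ ⥤ Paths (Γ ⊕ Γ')).Faithful := by
  rw [inlF, ← Cat.freeMap_eq_lift]
  exact Cat.faithful_freeMap _ fun a => (inlPre_star_bijective a).1

instance : (inrF : Paths Γ' ⥤ Paths (Γ ⊕ Γ')).Full := by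
  rw [inrF, ← Cat.freeMap_eq_lift]
  exact Cat.full_freeMap _ Sum.inr_injective fun a => (inrPre_star_bijective a).2

instance : (inrF : Paths Γ' ⥤ Paths (Γ ⊕ Γ')).Faithful := by
  rw [inrF, ← Cat.freeMap_eq_lift]
  exact Cat.faithful_freeMap _ fun a => (inrPre_star_bijective a).1

theorem Sum.isLeft_eq_of_path {x y : Γ ⊕ Γ'} (p : Quiver.Path x y) : x.isLeft = y.isLeft := by
  induction p with
  | nil => rfl
  | @cons y z _ e ih =>
    rw [ih]
    cases y <;> cases z <;> first | rfl | exact e.elim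

theorem isLeft_obj_eq_of_connected {Ξ : Type u₁} [Quiver.{w} Ξ]
    (hconn : ∀ a b : Ξ, Relation.EqvGen (fun x y : Ξ => Nonempty (x ⟶ y)) a b)
    (F : Paths Ξ ⥤ Paths (Γ ⊕ Γ')) (a b : Paths Ξ) : (F.obj a).isLeft = (F.obj b).isLeft := by
  induction hconn a b with
  | rel x y e => exact Sum.isLeft_eq_of_path (F.map e.some.toPath)
  | refl => rfl
  | symm _ _ _ ih => exact ih.symm
  | trans _ _ _ _ _ ih₁ ih₂ => exact ih₁.trans ih₂

theorem exists_comp_inlF_of_isLeft {Ξ : Type u₁} [Quiver.{w} Ξ] (F : Paths Ξ ⥤ Paths (Γ ⊕ Γ'))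
    (hF : ∀ X, (F.obj X).isLeft) : ∃ G : Paths Ξ ⥤ Paths Γ, G ⋙ inlF = F :=
  inlF.exists_comp_eq_of_full_of_faithful F fun X => by
    obtain ⟨a, ha⟩ := Sum.isLeft_iff.mp (hF X)
    exact ⟨a, ha.symm⟩

theorem exists_comp_inrF_of_isRight {Ξ : Type u₁} [Quiver.{w} Ξ] (F : Paths Ξ ⥤ Paths (Γ ⊕ Γ'))
    (hF : ∀ X, (F.obj X).isRight) : ∃ G : Paths Ξ ⥤ Paths Γ', G ⋙ inrF = F :=
  inrF.exists_comp_eq_of_full_of_faithful F fun X => by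
    obtain ⟨a, ha⟩ := Sum.isRight_iff.mp (hF X)
    exact ⟨a, ha.symm⟩

end SumQuiver

/-- If `Ξ` is a connected quiver (nonempty, with the equivalence relation
generated by "there is an arrow from `a` to `b`" total), then every functor
`Paths Ξ ⥤ Paths (Γ ⊕ Γ')` factors through exactly one of the two inclusion-induced
functors, and consequently the functors `Paths Ξ ⥤ Paths (Γ ⊕ Γ')` are in bijection with
the disjoint union of the functors into `Paths Γ` and those into `Paths Γ'`. -/
theorem stmt_6 {Ξ : Type u₁} [Quiver.{w} Ξ] [Quiver.{v} Γ] [Quiver.{v} Γ']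
    (hne : Nonempty Ξ)
    (hconn : ∀ a b : Ξ, Relation.EqvGen (fun x y : Ξ => Nonempty (x ⟶ y)) a b) :
    (∀ F : Paths Ξ ⥤ Paths (Γ ⊕ Γ'),
      Xor' (∃ G : Paths Ξ ⥤ Paths Γ, F = G ⋙ inlF)
           (∃ G' : Paths Ξ ⥤ Paths Γ', F = G' ⋙ inrF)) ∧
    Nonempty ((Paths Ξ ⥤ Paths (Γ ⊕ Γ')) ≃
      ((Paths Ξ ⥤ Paths Γ) ⊕ (Paths Ξ ⥤ Paths Γ'))) := by
  obtain ⟨x₀⟩ := hne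
  have not_both (G : Paths Ξ ⥤ Paths Γ) (G' : Paths Ξ ⥤ Paths Γ') : G ⋙ inlF ≠ G' ⋙ inrF :=
    fun h => Sum.inl_ne_inr (Functor.congr_obj h x₀)
  have factor (F : Paths Ξ ⥤ Paths (Γ ⊕ Γ')) :
      Xor' (∃ G : Paths Ξ ⥤ Paths Γ, F = G ⋙ inlF) (∃ G' : Paths Ξ ⥤ Paths Γ', F = G' ⋙ inrF) := by
    have hside X := isLeft_obj_eq_of_connected hconn F X x₀
    cases hx₀ : (F.obj x₀).isLeft
    · obtain ⟨G', rfl⟩ := exists_comp_inrF_of_isRight F fun X =>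
        Sum.isLeft_eq_false.mp ((hside X).trans hx₀)
      exact Or.inr ⟨⟨G', rfl⟩, fun ⟨G, hG⟩ => not_both G G' hG.symm⟩
    · obtain ⟨G, rfl⟩ := exists_comp_inlF_of_isLeft F fun X => (hside X).trans hx₀
      exact Or.inl ⟨⟨G, rfl⟩, fun ⟨G', hG'⟩ => not_both G G' hG'⟩
  refine ⟨factor, ⟨(Equiv.ofBijective (Sum.elim (· ⋙ inlF) (· ⋙ inrF)) ⟨?_, fun F => ?_⟩).symm⟩⟩
  · exact (inlF.comp_left_injective Sum.inl_injective).sumElim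
      (inrF.comp_left_injective Sum.inr_injective) not_both
  · rcases factor F with ⟨⟨G, rfl⟩, -⟩ | ⟨⟨G', rfl⟩, -⟩
    exacts [⟨.inl G, rfl⟩, ⟨.inr G', rfl⟩]
end

section
/- Every monotone map f : Fin (m+1) → Fin (n+1) factors uniquely as an active morphism followed by a closed morphism: there exist unique natural numbers k and c with c + k ≤ n, and a unique monotone map g : Fin (m+1) → Fin (k+1) with g 0 = 0 and g (Fin.last m) = Fin.last k, such that (f i : ℕ) = c + (g i : ℕ) for every i : Fin (m+1). (This is the active–closed factorization system on the simplex category: active morphisms preserve the minimum and the maximum, and closed morphisms are the order-preserving injections whose image is an interval, i.e. the maps j ↦ c + j.) -/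
/-- The active–closed factorization system on the simplex category: every
monotone map `f : Fin (m+1) → Fin (n+1)` factors uniquely as an active morphism
(`g : Fin (m+1) → Fin (k+1)` monotone with `g 0 = 0` and `g (last m) = last k`) followed by
a closed morphism (the interval inclusion `j ↦ c + j`, for unique `k, c` with `c + k ≤ n`). -/
theorem stmt_7 (m n : ℕ) (f : Fin (m + 1) → Fin (n + 1)) (hf : Monotone f) :
    ∃! t : Σ _k : ℕ, ℕ × (Fin (m + 1) → Fin (_k + 1)),
      t.2.1 + t.1 ≤ n ∧ Monotone t.2.2 ∧ t.2.2 0 = 0 ∧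
      t.2.2 (Fin.last m) = Fin.last t.1 ∧
      ∀ i : Fin (m + 1), (f i : ℕ) = t.2.1 + (t.2.2 i : ℕ) := by
  have hc : ∀ i, (f 0 : ℕ) ≤ (f i : ℕ) := fun i => hf (Fin.zero_le i)
  have hk : ∀ i, (f i : ℕ) - (f 0 : ℕ) ≤ (f (Fin.last m) : ℕ) - (f 0 : ℕ) :=
    fun i => Nat.sub_le_sub_right (hf (Fin.le_last i)) _
  refine ⟨⟨(f (Fin.last m) : ℕ) - (f 0 : ℕ), (f 0 : ℕ),
      fun i => ⟨(f i : ℕ) - (f 0 : ℕ), Nat.lt_succ_of_le (hk i)⟩⟩,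
    ⟨?_, ?_, ?_, ?_, ?_⟩, ?_⟩
  · show (f 0 : ℕ) + ((f (Fin.last m) : ℕ) - (f 0 : ℕ)) ≤ n
    have := Nat.lt_succ_iff.mp (f (Fin.last m)).isLt
    have := hc (Fin.last m)
    omega
  · intro i j hij
    simp only [Fin.mk_le_mk]
    exact Nat.sub_le_sub_right (hf hij) _
  · apply Fin.ext; simp
  · apply Fin.ext; simp [Fin.last]
  · intro i
    show (f i : ℕ) = (f 0 : ℕ) + ((f i : ℕ) - (f 0 : ℕ))
    have := hc i
    omega
  · rintro ⟨k', c', g⟩ ⟨h1, h2, h3, h4, h5⟩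
    simp only at h1 h2 h3 h4 h5
    have hc' : c' = (f 0 : ℕ) := by
      have := h5 0
      rw [h3] at this
      simpa using this.symm
    have hk' : k' = (f (Fin.last m) : ℕ) - (f 0 : ℕ) := by
      have := h5 (Fin.last m)
      rw [h4, Fin.val_last] at this
      omega
    subst hk' hc'
    simp only [Sigma.mk.inj_iff, heq_eq_eq, Prod.mk.injEq, true_and]
    funext i
    apply Fin.ext
    have h := h5 i
    have h2 := hc i
    simp only [Fin.val_mk] at *
    omega
end

section
/- Let m, n ≥ 1. The map sending a functor F : Paths C_m ⥤ Paths C_n to the pair (φ, L), where φ : ZMod m → ZMod n is the action of F on objects (= vertices) and L : ZMod m → ℕ is defined by L v = length (F.map e_v), is a bijection from the set of functors Paths C_m ⥤ Paths C_n onto the set of pairs (φ : ZMod m → ZMod n, L : ZMod m → ℕ) satisfying (L v : ZMod n) = φ (v + 1) - φ v for every v : ZMod m. -/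
open CategoryTheory

/-- The cyclic quiver `C n`: vertex set `ZMod n`, with exactly one arrow `v ⟶ v + 1` for each
vertex `v`, and no other arrows. -/
abbrev CyclicQuiver (n : ℕ) := ZMod n

instance (n : ℕ) : Quiver (CyclicQuiver n) :=
  ⟨fun a b => PLift (b = a + 1)⟩

/-- The unique arrow `e_v : v ⟶ v + 1` of the cyclic quiver. -/
def cyclicArrow (n : ℕ) (v : CyclicQuiver n) : v ⟶ (v + 1 : ZMod n) := ⟨rfl⟩

/-- The identity, viewed as a map from objects of the path category back to vertices. -/
def toV {V : Type*} : Paths V → V := id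

/-!
In `C_n` there is at most one arrow between two vertices, so a path is determined by its
endpoints and its length, and a path from `a` to `b` of length `k` exists exactly when
`k ≡ b - a` in `ZMod n`. A functor out of `Paths C_m` is the lift of a prefunctor, i.e. a choice of
images of the vertices and of a path `φ v ⟶ φ (v + 1)` for every `v`, which is thus the same as a
length `L v` with `L v ≡ φ (v + 1) - φ v`.
-/

@[simp]
lemma Quiver.Path.length_cast {V : Type*} [Quiver V] {a b a' b' : V} (ha : a = a') (hb : b = b')
    (p : Quiver.Path a b) : (p.cast ha hb).length = p.length := by
  subst ha hb
  rfl

@[simp]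
lemma CategoryTheory.Paths.length_eqToHom_comp_comp {V : Type*} [Quiver V] {a b a' b' : Paths V}
    (ha : a' = a) (hb : b = b') (p : a ⟶ b) :
    (eqToHom ha ≫ p ≫ eqToHom hb).length = Quiver.Path.length p := by
  subst ha hb
  simp

namespace CyclicQuiver

variable {n : ℕ}

lemma natCast_path_length {a b : CyclicQuiver n} (p : Quiver.Path a b) :
    (p.length : ZMod n) = b - a := by
  induction p with
  | nil => simp
  | cons p e ih =>
    obtain ⟨rfl⟩ := e
    rw [Quiver.Path.length_cons, Nat.cast_succ, ih]
    ring

lemma path_eq_of_length_eq {a b : CyclicQuiver n} {p q : Quiver.Path a b}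
    (h : p.length = q.length) : p = q := by
  induction p with
  | nil =>
    cases q with
    | nil => rfl
    | cons => simp at h
  | cons p e ih =>
    cases q with
    | nil => simp at h
    | cons q f =>
      obtain ⟨he⟩ := e
      obtain ⟨hf⟩ := f
      obtain rfl := add_right_cancel (he.symm.trans hf)
      rw [ih (by simpa using h)]

def pathOfLength (a : CyclicQuiver n) : (b : CyclicQuiver n) → (k : ℕ) →
    (k : ZMod n) = b - a → Quiver.Path a b
  | b, 0, h => Quiver.Path.nil.cast rfl (sub_eq_zero.mp (by simpa using h.symm)).symm
  | b, k + 1, h =>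
    (pathOfLength a (b - 1) k (by push_cast at h; linear_combination h)).cons
      ⟨(sub_add_cancel b 1).symm⟩

@[simp]
lemma length_pathOfLength (a b : CyclicQuiver n) (k : ℕ) (h : (k : ZMod n) = b - a) :
    (pathOfLength a b k h).length = k := by
  induction k generalizing b with
  | zero => simp [pathOfLength]
  | succ k ih => simp [pathOfLength, ih]

end CyclicQuiver

theorem stmt_10_general (m n : ℕ) :
    (∀ F : Paths (CyclicQuiver m) ⥤ Paths (CyclicQuiver n), ∀ v : ZMod m,
      (((Quiver.Path.length (F.map ((Paths.of _).map (cyclicArrow m v)))) : ZMod n))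
        = toV (F.obj ((Paths.of _).obj (v + 1))) - toV (F.obj ((Paths.of _).obj v))) ∧
    Function.Injective
      (fun F : Paths (CyclicQuiver m) ⥤ Paths (CyclicQuiver n) =>
        ((fun v : ZMod m => toV (F.obj ((Paths.of _).obj v)),
          fun v : ZMod m => Quiver.Path.length (F.map ((Paths.of _).map (cyclicArrow m v))))
          : (ZMod m → ZMod n) × (ZMod m → ℕ))) ∧
    (∀ (φ : ZMod m → ZMod n) (L : ZMod m → ℕ),
      (∀ v : ZMod m, ((L v : ZMod n)) = φ (v + 1) - φ v) →
      ∃ F : Paths (CyclicQuiver m) ⥤ Paths (CyclicQuiver n),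
        (∀ v : ZMod m, toV (F.obj ((Paths.of _).obj v)) = φ v) ∧
        (∀ v : ZMod m,
          Quiver.Path.length (F.map ((Paths.of _).map (cyclicArrow m v))) = L v)) := by
  refine ⟨fun F v => CyclicQuiver.natCast_path_length _, fun F G h => ?_, fun φ L hL => ?_⟩
  · obtain ⟨hobj, hlen⟩ := Prod.mk.inj h
    refine Paths.ext_functor hobj fun a b ⟨e⟩ => ?_
    subst e
    apply CyclicQuiver.path_eq_of_length_eq
    rw [Paths.length_eqToHom_comp_comp]
    exact congrFun hlen a
  · let P : CyclicQuiver m ⥤q Paths (CyclicQuiver n) :=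
      { obj := φ
        map := fun {a b} e => CyclicQuiver.pathOfLength (φ a) (φ b) (L a) (e.down ▸ hL a) }
    refine ⟨Paths.lift P, fun v => rfl, fun v => ?_⟩
    erw [Paths.lift_toPath]
    exact CyclicQuiver.length_pathOfLength _ _ _ _

/-- For `m, n ≥ 1`, sending a functor `F : Paths C_m ⥤ Paths C_n` to the
pair `(φ, L)` — its action `φ` on vertices and the lengths `L v` of the images of the
generating arrows — is a bijection onto the set of pairs with
`(L v : ZMod n) = φ (v+1) - φ v` for all `v`.  We state this as: every functor's pair
satisfies the condition, the assignment is injective, and every pair satisfying the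
condition arises from some functor. -/
theorem stmt_10 (m n : ℕ) (hm : 1 ≤ m) (hn : 1 ≤ n) :
    (∀ F : Paths (CyclicQuiver m) ⥤ Paths (CyclicQuiver n), ∀ v : ZMod m,
      (((Quiver.Path.length (F.map ((Paths.of _).map (cyclicArrow m v)))) : ZMod n))
        = toV (F.obj ((Paths.of _).obj (v + 1))) - toV (F.obj ((Paths.of _).obj v))) ∧
    Function.Injective
      (fun F : Paths (CyclicQuiver m) ⥤ Paths (CyclicQuiver n) =>
        ((fun v : ZMod m => toV (F.obj ((Paths.of _).obj v)),
          fun v : ZMod m => Quiver.Path.length (F.map ((Paths.of _).map (cyclicArrow m v))))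
          : (ZMod m → ZMod n) × (ZMod m → ℕ))) ∧
    (∀ (φ : ZMod m → ZMod n) (L : ZMod m → ℕ),
      (∀ v : ZMod m, ((L v : ZMod n)) = φ (v + 1) - φ v) →
      ∃ F : Paths (CyclicQuiver m) ⥤ Paths (CyclicQuiver n),
        (∀ v : ZMod m, toV (F.obj ((Paths.of _).obj v)) = φ v) ∧
        (∀ v : ZMod m,
          Quiver.Path.length (F.map ((Paths.of _).map (cyclicArrow m v))) = L v)) :=
  stmt_10_general m n
end

section
/- Let m, n ≥ 1 and let F : Paths C_m ⥤ Paths C_n be any functor between the free categories on the cyclic quivers. Then n divides S(F) := Σ_{v : ZMod m} length (F.map e_v). (Hence the degree deg F := S(F) / n of F is a well-defined natural number.) -/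
/-!
Modulo `n`, a path from `a` to `b` in `C_n` has length `b - a`. Hence, writing `f` for the
object map of `F`, the sum `S(F)` reduces modulo `n` to `∑ v, (f (v + 1) - f v)`, which
telescopes around the cycle to `0`.
-/

open CategoryTheory

theorem Fintype.sum_sub_comp_add_right {α β : Type*} [Fintype α] [AddGroup α]
    [AddCommGroup β] (f : α → β) (a : α) : ∑ x, (f (x + a) - f x) = 0 := by
  rw [Finset.sum_sub_distrib, sub_eq_zero]
  exact Equiv.sum_comp (Equiv.addRight a) f

theorem CyclicQuiver.natCast_length {n : ℕ} {a b : CyclicQuiver n} (p : Quiver.Path a b) :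
    (p.length : ZMod n) = b - a := by
  induction p with
  | nil => simp
  | cons p e ih =>
    obtain ⟨rfl⟩ := e
    rw [Quiver.Path.length_cons, Nat.cast_succ, ih]
    ring

theorem stmt_11_general (m n : ℕ) [NeZero m]
    (F : Paths (CyclicQuiver m) ⥤ Paths (CyclicQuiver n)) :
    n ∣ ∑ v : ZMod m, Quiver.Path.length (F.map ((Paths.of (CyclicQuiver m)).map (cyclicArrow m v))) := by
  let f : ZMod m → ZMod n := fun v => F.obj ((Paths.of (CyclicQuiver m)).obj v)
  have hlength (v : ZMod m) :
      ((F.map ((Paths.of (CyclicQuiver m)).map (cyclicArrow m v))).length : ZMod n) =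
        f (v + 1) - f v :=
    CyclicQuiver.natCast_length _
  rw [← ZMod.natCast_eq_zero_iff, Nat.cast_sum, Finset.sum_congr rfl fun v _ => hlength v]
  exact Fintype.sum_sub_comp_add_right f 1

/-- For `m, n ≥ 1` and any functor `F : Paths C_m ⥤ Paths C_n`, the total
length `S(F) = Σ_v length (F.map e_v)` is divisible by `n`; hence `deg F = S(F)/n` is a
well-defined natural number. -/
theorem stmt_11 (m n : ℕ) [NeZero m] [NeZero n]
    (F : Paths (CyclicQuiver m) ⥤ Paths (CyclicQuiver n)) :
    n ∣ ∑ v : ZMod m, Quiver.Path.length (F.map ((Paths.of (CyclicQuiver m)).map (cyclicArrow m v))) :=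
  stmt_11_general m n F
end

section
/- Let m, n, p ≥ 1 and let F : Paths C_m ⥤ Paths C_n and G : Paths C_n ⥤ Paths C_p be functors between the free categories on the cyclic quivers. Then n · S(F ⋙ G) = S(F) · S(G). Equivalently, degree is multiplicative under composition: deg (F ⋙ G) = deg F · deg G, where deg F = S(F)/n, deg G = S(G)/p and deg (F ⋙ G) = S(F ⋙ G)/p. -/
open CategoryTheory

/-!
A path of length `ℓ` from `a` in `C_k` is `e_a, e_{a+1}, …, e_{a+ℓ-1}`, so a functor `Φ` out of
`Paths C_k` sends it to a path of length `∑_{i<ℓ} |Φ e_{a+i}|`, which is `t · S(Φ)` when `ℓ = k t`.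
Take a loop of length `m` in `C_m`: its image under `F` is a loop in `C_n`, so its length `S(F)` is
a multiple `n t`, and then `S(F ⋙ G)`, the length of the image of that loop under `G`, is
`t · S(G)`.
-/

open Finset

theorem CategoryTheory.Paths.length_map_cons {V W : Type*} [Quiver V] [Quiver W]
    (Φ : Paths V ⥤ Paths W) {a b c : V} (q : Quiver.Path a b) (e : b ⟶ c) :
    (Φ.map (X := a) (Y := c) (q.cons e)).length =
      (Φ.map (X := a) (Y := b) q).length + (Φ.map ((Paths.of V).map e)).length :=
  (congrArg Quiver.Path.length (Φ.map_comp (X := a) (Y := b) q ((Paths.of V).map e))).trans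
    (Quiver.Path.length_comp _ _)

theorem ZMod.sum_range_add_natCast {n : ℕ} [NeZero n] {M : Type*} [AddCommMonoid M]
    (g : ZMod n → M) (a : ZMod n) :
    ∑ i ∈ range n, g (a + i) = ∑ w, g w :=
  sum_nbij' (fun i => a + i) (fun w => (w - a).val) (by simp)
    (fun w _ => mem_range.2 (w - a).val_lt)
    (fun i hi => by simp [ZMod.val_natCast_of_lt (mem_range.1 hi)]) (by simp) (fun _ _ => rfl)

theorem ZMod.sum_range_mul_add_natCast {n : ℕ} [NeZero n] {M : Type*} [AddCommMonoid M]
    (g : ZMod n → M) (a : ZMod n) (t : ℕ) :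
    ∑ i ∈ range (n * t), g (a + i) = t • ∑ w, g w := by
  induction t with
  | zero => simp
  | succ t ih =>
    rw [Nat.mul_succ, sum_range_add, ih, succ_nsmul,
      ← ZMod.sum_range_add_natCast g (a + (n * t : ℕ))]
    simp only [Nat.cast_add, add_assoc]

namespace CyclicQuiver

variable {k l : ℕ}

theorem eq_add_length {a b : CyclicQuiver k} (q : Quiver.Path a b) : b = a + q.length := by
  induction q with
  | nil => simp
  | cons q e ih =>
    obtain ⟨rfl⟩ := e
    rw [Quiver.Path.length_cons, Nat.cast_succ, ← add_assoc, ← ih]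

theorem exists_path_length {a b : CyclicQuiver k} {ℓ : ℕ} (h : b = a + ℓ) :
    ∃ q : Quiver.Path a b, q.length = ℓ := by
  induction ℓ generalizing b with
  | zero =>
    obtain rfl : b = a := by simpa using h
    exact ⟨.nil, rfl⟩
  | succ ℓ ih =>
    obtain ⟨q, hq⟩ := ih (b := a + ℓ) rfl
    exact ⟨q.cons ⟨by rw [h]; push_cast; ring⟩, by rw [Quiver.Path.length_cons, hq]⟩

theorem dvd_length {a : CyclicQuiver k} (q : Quiver.Path a a) : k ∣ q.length := by
  have h := eq_add_length q
  rwa [left_eq_add, ZMod.natCast_eq_zero_iff] at h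

/-- `S(Φ)` is `∑ v, arrowLength Φ v`. -/
def arrowLength (Φ : Paths (CyclicQuiver k) ⥤ Paths (CyclicQuiver l)) (v : ZMod k) : ℕ :=
  (Φ.map ((Paths.of (CyclicQuiver k)).map (cyclicArrow k v))).length

theorem length_map (Φ : Paths (CyclicQuiver k) ⥤ Paths (CyclicQuiver l))
    {a b : CyclicQuiver k} (q : Quiver.Path a b) :
    (Φ.map (X := a) (Y := b) q).length = ∑ i ∈ range q.length, arrowLength Φ (a + i) := by
  induction q with
  | nil => exact congrArg Quiver.Path.length (Φ.map_id (X := a))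
  | @cons c d q e ih =>
    obtain ⟨rfl⟩ := e
    rw [Paths.length_map_cons, ih, Quiver.Path.length_cons, sum_range_succ, ← eq_add_length q]
    rfl

theorem length_map_of_length_eq_mul [NeZero k]
    (Φ : Paths (CyclicQuiver k) ⥤ Paths (CyclicQuiver l)) {a b : CyclicQuiver k}
    (q : Quiver.Path a b) {t : ℕ} (hq : q.length = k * t) :
    (Φ.map (X := a) (Y := b) q).length = t * ∑ v, arrowLength Φ v := by
  rw [length_map, hq, ZMod.sum_range_mul_add_natCast, smul_eq_mul]

end CyclicQuiver

open CyclicQuiver in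
theorem stmt_12_general (m n p : ℕ) [NeZero m] [NeZero n]
    (F : Paths (CyclicQuiver m) ⥤ Paths (CyclicQuiver n))
    (G : Paths (CyclicQuiver n) ⥤ Paths (CyclicQuiver p)) :
    n * (∑ v : ZMod m,
        Quiver.Path.length ((F ⋙ G).map ((Paths.of (CyclicQuiver m)).map (cyclicArrow m v)))) =
      (∑ v : ZMod m, Quiver.Path.length (F.map ((Paths.of (CyclicQuiver m)).map (cyclicArrow m v)))) *
      (∑ w : ZMod n, Quiver.Path.length (G.map ((Paths.of (CyclicQuiver n)).map (cyclicArrow n w)))) := by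
  obtain ⟨loop, hloop⟩ : ∃ loop : (Paths.of (CyclicQuiver m)).obj 0 ⟶ (Paths.of _).obj 0,
      loop.length = m * 1 :=
    exists_path_length (by simp)
  obtain ⟨t, ht⟩ := dvd_length (F.map loop)
  have hF : ∑ v, arrowLength F v = n * t := by
    rw [← ht, length_map_of_length_eq_mul F loop hloop, one_mul]
  have hFG : ∑ v, arrowLength (F ⋙ G) v = t * ∑ w, arrowLength G w := by
    rw [← length_map_of_length_eq_mul G (F.map loop) ht, ← one_mul (∑ v, _),
      ← length_map_of_length_eq_mul (F ⋙ G) loop hloop]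
    rfl
  change n * ∑ v, arrowLength (F ⋙ G) v = (∑ v, arrowLength F v) * ∑ w, arrowLength G w
  rw [hF, hFG, mul_assoc]

/-- Degree is multiplicative: for functors
`F : Paths C_m ⥤ Paths C_n` and `G : Paths C_n ⥤ Paths C_p` between free categories on
cyclic quivers, `n · S(F ⋙ G) = S(F) · S(G)`, where `S(-)` is the sum of the lengths of the
images of the generating arrows; equivalently `deg (F ⋙ G) = deg F · deg G`. -/
theorem stmt_12 (m n p : ℕ) [NeZero m] [NeZero n] [NeZero p]
    (F : Paths (CyclicQuiver m) ⥤ Paths (CyclicQuiver n))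
    (G : Paths (CyclicQuiver n) ⥤ Paths (CyclicQuiver p)) :
    n * (∑ v : ZMod m,
        Quiver.Path.length ((F ⋙ G).map ((Paths.of (CyclicQuiver m)).map (cyclicArrow m v)))) =
      (∑ v : ZMod m, Quiver.Path.length (F.map ((Paths.of (CyclicQuiver m)).map (cyclicArrow m v)))) *
      (∑ w : ZMod n, Quiver.Path.length (G.map ((Paths.of (CyclicQuiver n)).map (cyclicArrow n w)))) :=
  stmt_12_general m n p F G
end

section
/- Let Γ be a quiver whose vertex type is finite and nonempty of cardinality n, such that: (a) for every vertex v there is exactly one pair (w, e) with e an arrow from v to w, and exactly one pair (u, e') with e' an arrow from u to v; and (b) Γ is connected, i.e. the equivalence relation on vertices generated by 'there exists an arrow from a to b' is total. Then Γ is isomorphic as a quiver to the cyclic quiver C_n: there is a bijection φ : ZMod n → (vertices of Γ) together with, for each v : ZMod n, a bijection between the arrows v ⟶ v+1 of C_n and the arrows φ v ⟶ φ (v+1) of Γ, exhausting all arrows of Γ. (Every finite cyclically-directed graph with n vertices is isomorphic to the cyclically-directed graph with vertex set ZMod n.) -/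
/-
Every vertex `v` has exactly one outgoing arrow, to `s v` say, and exactly one incoming one, so
`s` is injective, hence a permutation of the finite vertex set, and any two vertices are joined by
at most one arrow. Connectedness makes `s` a single cycle: the orbit of a vertex `x` is all of `Γ`,
so its minimal period is `n`, and `k ↦ s^k x` identifies `ZMod n` with the vertices and the arrow
`k ⟶ k + 1` with the arrow out of `s^k x`.
-/

open CategoryTheory

open Function

theorem Equiv.Perm.exists_zmod_equiv_of_forall_sameCycle {α : Type*} [Fintype α]
    (σ : Equiv.Perm α) (x : α) (hσ : ∀ y, σ.SameCycle x y) :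
    ∃ g : ZMod (Fintype.card α) ≃ α, ∀ k, g (k + 1) = σ (g k) := by
  classical
  have horbit : MulAction.orbit (Subgroup.zpowers σ) x = .univ := by
    refine Set.eq_univ_of_forall fun y => ?_
    obtain ⟨i, hi⟩ := hσ y
    exact ⟨⟨σ ^ i, Subgroup.zpow_mem_zpowers σ i⟩, hi⟩
  have hperiod : minimalPeriod (σ • ·) x = Fintype.card α := by
    rw [MulAction.minimalPeriod_eq_card, ← Nat.card_eq_fintype_card, horbit, Nat.card_univ,
      Nat.card_eq_fintype_card]
  rw [← hperiod]
  refine ⟨(MulAction.orbitZPowersEquiv σ x).symm.trans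
    ((Equiv.setCongr horbit).trans (Equiv.Set.univ α)), fun k => ?_⟩
  rw [← ZMod.intCast_zmod_cast k, ← Int.cast_one, ← Int.cast_add]
  simp only [Equiv.trans_apply, MulAction.orbitZPowersEquiv_symm_apply', Equiv.setCongr_apply,
    Equiv.Set.univ_apply]
  rw [add_comm, zpow_add, zpow_one, mul_smul]
  rfl

namespace Quiver

variable {V : Type*} [Quiver V]

theorem subsingleton_hom_of_existsUnique_out (hout : ∀ v : V, ∃! _ : Σ' w : V, v ⟶ w, True)
    (x y : V) : Subsingleton (x ⟶ y) :=
  ⟨fun e₁ e₂ => by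
    have h := (hout x).unique (y₁ := ⟨y, e₁⟩) (y₂ := ⟨y, e₂⟩) trivial trivial
    injection h⟩

variable (hout : ∀ v : V, ∃! _ : Σ' w : V, v ⟶ w, True)

noncomputable def outTarget (v : V) : V :=
  (hout v).exists.choose.1

noncomputable def outArrow (v : V) : v ⟶ outTarget hout v :=
  (hout v).exists.choose.2

theorem eq_outTarget_of_hom {x y : V} (e : x ⟶ y) : y = outTarget hout x :=
  congrArg PSigma.fst ((hout x).unique (y₁ := ⟨y, e⟩) trivial (hout x).exists.choose_spec)

theorem outTarget_injective (hin : ∀ v : V, ∃! _ : Σ' u : V, u ⟶ v, True) :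
    Injective (outTarget hout) := by
  intro a b h
  have e : a ⟶ outTarget hout b := h ▸ outArrow hout a
  exact congrArg PSigma.fst ((hin _).unique (y₁ := ⟨a, e⟩) (y₂ := ⟨b, outArrow hout b⟩)
    trivial trivial)

noncomputable def outTargetPerm [Finite V] (hin : ∀ v : V, ∃! _ : Σ' u : V, u ⟶ v, True) :
    Equiv.Perm V :=
  Equiv.ofBijective _ (Finite.injective_iff_bijective.mp (outTarget_injective hout hin))

theorem sameCycle_outTargetPerm [Finite V] (hin : ∀ v : V, ∃! _ : Σ' u : V, u ⟶ v, True)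
    (hconn : ∀ a b : V, Relation.EqvGen (fun x y : V => Nonempty (x ⟶ y)) a b) (a b : V) :
    (outTargetPerm hout hin).SameCycle a b :=
  (Equiv.Perm.SameCycle.equivalence _).eqvGen_iff.mp
    (Relation.EqvGen.mono (fun _ _ ⟨e⟩ => ⟨1, (eq_outTarget_of_hom hout e).symm⟩) a b (hconn a b))

end Quiver

namespace CyclicQuiver

variable {n : ℕ} {V : Type*} [Quiver V]

def prefunctorOfArrows (g : ZMod n → V) (arr : ∀ k, g k ⟶ g (k + 1)) : CyclicQuiver n ⥤q V where
  obj := g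
  map {a _} e := Quiver.homOfEq (arr a) rfl (congrArg g e.down.symm)

theorem bijective_prefunctorOfArrows_map [∀ x y : V, Subsingleton (x ⟶ y)] (g : ZMod n → V)
    (arr : ∀ k, g k ⟶ g (k + 1)) (hg : ∀ {a b}, (g a ⟶ g b) → b = a + 1) (a b : CyclicQuiver n) :
    Bijective (fun e : a ⟶ b => (prefunctorOfArrows g arr).map e) :=
  ⟨fun _ _ _ => Subsingleton.elim (α := PLift (b = a + 1)) _ _,
    fun E => ⟨⟨hg E⟩, Subsingleton.elim _ _⟩⟩

end CyclicQuiver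

open Quiver in
/-- Every finite cyclically-directed graph with `n` vertices — a quiver on a
finite nonempty vertex type of cardinality `n` in which every vertex has exactly one exiting
and exactly one entering edge, and which is connected — is isomorphic as a quiver to the
cyclic quiver `C n`. -/
theorem stmt_13 {Γ : Type*} [Quiver Γ] [Fintype Γ] [Nonempty Γ] (n : ℕ)
    (hcard : Fintype.card Γ = n)
    (hout : ∀ v : Γ, ∃! p : Σ' w : Γ, v ⟶ w, True)
    (hin : ∀ v : Γ, ∃! p : Σ' u : Γ, u ⟶ v, True)
    (hconn : ∀ a b : Γ, Relation.EqvGen (fun x y : Γ => Nonempty (x ⟶ y)) a b) :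
    ∃ φ : CyclicQuiver n ⥤q Γ, Function.Bijective φ.obj ∧
      ∀ a b : CyclicQuiver n, Function.Bijective (fun e : a ⟶ b => φ.map e) := by
  subst hcard
  obtain ⟨x⟩ := ‹Nonempty Γ›
  obtain ⟨g, hg⟩ := (outTargetPerm hout hin).exists_zmod_equiv_of_forall_sameCycle x
    (sameCycle_outTargetPerm hout hin hconn x)
  have := subsingleton_hom_of_existsUnique_out hout
  let arr k : g k ⟶ g (k + 1) := homOfEq (outArrow hout (g k)) rfl (hg k).symm
  refine ⟨CyclicQuiver.prefunctorOfArrows g arr, g.bijective,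
    CyclicQuiver.bijective_prefunctorOfArrows_map g arr fun {a b} e => g.injective ?_⟩
  exact (eq_outTarget_of_hom hout e).trans (hg a).symm
end

section
/- Let E be the category whose objects are the natural numbers q ≥ 1, and whose morphisms from q to q' are the monotone maps h : Fin (q+1) → Fin (q'+1) satisfying h 0 = 0 and h (Fin.last q) = Fin.last q', with composition given by composition of maps. Let J : SimplexCategory ⥤ E be the functor sending [p] to p + 2 and sending a monotone map g : Fin (p+1) → Fin (p'+1) to its extension ĝ : Fin (p+3) → Fin (p'+3) defined by ĝ 0 = 0, ĝ (Fin.last (p+2)) = Fin.last (p'+2), and ĝ (i+1) = g i + 1 for i : Fin (p+1) (i.e. adjoining a new minimum and a new maximum). Then J is an initial functor: for every object σ of E, the comma category J ↓ σ (of objects of SimplexCategory equipped with a morphism J [p] → σ in E) has contractible classifying space; equivalently, restriction along J preserves all limits of E-indexed diagrams. -/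
open CategoryTheory

/-- The category `E`: objects are natural numbers `q ≥ 1`; morphisms `q → q'` are monotone
maps `Fin (q+1) → Fin (q'+1)` preserving the minimum and the maximum. -/
def EE : Type := { q : ℕ // 1 ≤ q }

instance : Category EE where
  Hom q q' := { h : Fin (q.1 + 1) → Fin (q'.1 + 1) //
    Monotone h ∧ h 0 = 0 ∧ h (Fin.last q.1) = Fin.last q'.1 }
  id q := ⟨id, monotone_id, rfl, rfl⟩
  comp {a b c} f g := ⟨g.1 ∘ f.1, g.2.1.comp f.2.1,
    by show g.1 (f.1 0) = 0; rw [f.2.2.1, g.2.2.1],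
    by show g.1 (f.1 (Fin.last a.1)) = Fin.last c.1; rw [f.2.2.2, g.2.2.2]⟩
  id_comp f := Subtype.ext rfl
  comp_id f := Subtype.ext rfl
  assoc f g h := Subtype.ext rfl

/-- The extension `ĝ : Fin (p+3) → Fin (p'+3)` of `g : Fin (p+1) → Fin (p'+1)`, obtained by
adjoining a new minimum and a new maximum:  `ĝ 0 = 0`, `ĝ (last) = last`, and
`ĝ (i+1) = g i + 1`. -/
def hatFun {p p' : ℕ} (g : Fin (p + 1) → Fin (p' + 1)) (i : Fin (p + 3)) : Fin (p' + 3) :=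
  if h0 : i.1 = 0 then 0
  else if hl : i.1 = p + 2 then Fin.last (p' + 2)
  else ((g ⟨i.1 - 1, by have := i.isLt; omega⟩).succ.castSucc)

theorem hatFun_zero {p p' : ℕ} (g : Fin (p + 1) → Fin (p' + 1)) : hatFun g 0 = 0 := by
  unfold hatFun
  rw [dif_pos (Fin.val_zero _)]

theorem hatFun_last {p p' : ℕ} (g : Fin (p + 1) → Fin (p' + 1)) :
    hatFun g (Fin.last (p + 2)) = Fin.last (p' + 2) := by
  unfold hatFun
  rw [dif_neg (by simp only [Fin.val_last]; omega), dif_pos (Fin.val_last _)]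

theorem hatFun_mid {p p' : ℕ} (g : Fin (p + 1) → Fin (p' + 1)) (i : Fin (p + 3))
    (h0 : ¬ i.1 = 0) (hl : ¬ i.1 = p + 2) (c : Fin (p + 1)) (hc : c.1 = i.1 - 1) :
    hatFun g i = (g c).succ.castSucc := by
  have hlt : i.1 - 1 < p + 1 := by have := i.isLt; omega
  have hcc : c = ⟨i.1 - 1, hlt⟩ := Fin.ext (by rw [hc])
  subst hcc
  unfold hatFun
  rw [dif_neg h0, dif_neg hl]

theorem hatFun_mono {p p' : ℕ} {g : Fin (p + 1) → Fin (p' + 1)} (hg : Monotone g) :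
    Monotone (hatFun g) := by
  intro i j hij
  have hij' : i.1 ≤ j.1 := hij
  have hi := i.isLt
  have hj := j.isLt
  unfold hatFun
  split_ifs <;>
    first
      | exact Fin.zero_le _
      | exact le_refl _
      | exact Fin.le_last _
      | (exfalso; omega)
      | exact Fin.castSucc_le_castSucc_iff.mpr (Fin.succ_le_succ_iff.mpr
          (hg (Fin.mk_le_mk.mpr (by omega))))

theorem hatFun_id (p : ℕ) :
    hatFun (fun i : Fin (p + 1) => i) = fun i : Fin (p + 3) => i := by
  funext i
  by_cases h1 : i.1 = 0
  · rw [show i = 0 from Fin.ext (by simp [h1]), hatFun_zero]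
  · by_cases h2 : i.1 = p + 2
    · rw [show i = Fin.last (p + 2) from Fin.ext (by simp [h2]), hatFun_last]
    · rw [hatFun_mid (fun i => i) i h1 h2 ⟨i.1 - 1, by have := i.isLt; omega⟩ rfl]
      exact Fin.ext (show i.1 - 1 + 1 = i.1 by omega)

theorem hatFun_comp {p p' p'' : ℕ} (g : Fin (p + 1) → Fin (p' + 1))
    (g' : Fin (p' + 1) → Fin (p'' + 1)) :
    hatFun (fun i => g' (g i)) = fun i => hatFun g' (hatFun g i) := by
  funext i
  by_cases h1 : i.1 = 0
  · rw [show i = 0 from Fin.ext (by simp [h1]), hatFun_zero, hatFun_zero, hatFun_zero]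
  · by_cases h2 : i.1 = p + 2
    · rw [show i = Fin.last (p + 2) from Fin.ext (by simp [h2]), hatFun_last, hatFun_last,
        hatFun_last]
    · have hlt : i.1 - 1 < p + 1 := by have := i.isLt; omega
      rw [hatFun_mid (fun i => g' (g i)) i h1 h2 ⟨i.1 - 1, hlt⟩ rfl,
        hatFun_mid g i h1 h2 ⟨i.1 - 1, hlt⟩ rfl,
        hatFun_mid g' ((g ⟨i.1 - 1, hlt⟩).succ.castSucc)
          (by simp) (by simp only [Fin.coe_castSucc, Fin.val_succ]
                        have := (g ⟨i.1 - 1, hlt⟩).isLt; omega)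
          (g ⟨i.1 - 1, hlt⟩) (by simp)]

/-- The functor `J : SimplexCategory ⥤ E`, sending `[p]` to `p + 2` and a monotone map
`g : Fin (p+1) → Fin (p'+1)` to its extension `ĝ : Fin (p+3) → Fin (p'+3)` obtained by
adjoining a new minimum and a new maximum. -/
def JJ : SimplexCategory ⥤ EE where
  obj x := ⟨x.len + 2, by omega⟩
  map {x y} f := ⟨hatFun f.toOrderHom, hatFun_mono f.toOrderHom.monotone,
    hatFun_zero _, hatFun_last _⟩
  map_id x := Subtype.ext (hatFun_id x.len)
  map_comp {x y z} f g := Subtype.ext (hatFun_comp f.toOrderHom g.toOrderHom)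

/-! The comma category `J ↓ σ`, for `σ = q`, has a terminal object: `[q]` together with the map
`c : Fin (q + 3) → Fin (q + 1)` that collapses each adjoined endpoint onto its neighbour. A morphism
`h : J [p] → σ` factors through it by the restriction `g` of `h` to the `p + 1` middle points, and
this factorisation is unique because `c ∘ ĝ` agrees with `g` on the middle points. A category with a
terminal object is connected, so `J` is initial. -/

open Limits

@[elab_as_elim]
lemma Fin.cases_middle {n : ℕ} {P : Fin (n + 3) → Prop} (zero : P 0) (last : P (Fin.last _))
    (middle : ∀ i : Fin (n + 1), P i.succ.castSucc) (i : Fin (n + 3)) : P i := by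
  rcases i with ⟨_ | k, hk⟩
  · exact zero
  · by_cases hl : k = n + 1
    · subst hl
      exact last
    · exact middle ⟨k, by omega⟩

/-- Collapses the adjoined endpoints: truncated subtraction sends `0` to `0`, and `min` sends
`q + 2` to `q`. -/
def clamp (q : ℕ) (i : Fin (q + 3)) : Fin (q + 1) := ⟨min (i.1 - 1) q, by omega⟩

lemma clamp_monotone (q : ℕ) : Monotone (clamp q) := fun i j hij => by
  simp only [clamp, Fin.mk_le_mk]
  have : i.1 ≤ j.1 := hij
  omega

@[simp] lemma clamp_zero (q : ℕ) : clamp q 0 = 0 := Fin.ext (by simp [clamp])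

@[simp] lemma clamp_last (q : ℕ) : clamp q (Fin.last _) = Fin.last q := Fin.ext (by simp [clamp])

@[simp] lemma clamp_succ_castSucc {q : ℕ} (j : Fin (q + 1)) : clamp q j.succ.castSucc = j :=
  Fin.ext (by simp only [clamp, Fin.val_castSucc, Fin.val_succ]; omega)

@[simp] lemma hatFun_succ_castSucc {p p' : ℕ} (g : Fin (p + 1) → Fin (p' + 1)) (i : Fin (p + 1)) :
    hatFun g i.succ.castSucc = (g i).succ.castSucc :=
  hatFun_mid g _ (by simp) (by simp only [Fin.val_castSucc, Fin.val_succ]; omega) i (by simp)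

lemma clamp_hatFun_succ_castSucc {p q : ℕ} {h : Fin (p + 3) → Fin (q + 1)} (h_zero : h 0 = 0)
    (h_last : h (Fin.last _) = Fin.last q) (i : Fin (p + 3)) :
    clamp q (hatFun (fun j => h j.succ.castSucc) i) = h i := by
  refine Fin.cases_middle ?_ ?_ (fun j => ?_) i
  · rw [hatFun_zero, clamp_zero, h_zero]
  · rw [hatFun_last, clamp_last, h_last]
  · rw [hatFun_succ_castSucc, clamp_succ_castSucc]

def clampHom (σ : EE) : JJ.obj (SimplexCategory.mk σ.1) ⟶ σ :=
  ⟨clamp σ.1, clamp_monotone σ.1, clamp_zero σ.1, clamp_last σ.1⟩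

def clampArrow (σ : EE) : CostructuredArrow JJ σ := CostructuredArrow.mk (clampHom σ)

def restrictHom {σ : EE} (X : CostructuredArrow JJ σ) : X.left ⟶ SimplexCategory.mk σ.1 :=
  SimplexCategory.Hom.mk ⟨fun i => X.hom.1 i.succ.castSucc,
    fun _ _ hij => X.hom.2.1 (Fin.castSucc_le_castSucc_iff.2 (Fin.succ_le_succ_iff.2 hij))⟩

def homClampArrow {σ : EE} (X : CostructuredArrow JJ σ) : X ⟶ clampArrow σ :=
  CostructuredArrow.homMk (restrictHom X)
    (Subtype.ext (funext (clamp_hatFun_succ_castSucc X.hom.2.2.1 X.hom.2.2.2)))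

def isTerminalClampArrow (σ : EE) : IsTerminal (clampArrow σ) :=
  IsTerminal.ofUniqueHom homClampArrow fun X f => by
    refine CostructuredArrow.hom_ext _ _
      (SimplexCategory.Hom.ext _ _ (OrderHom.ext _ _ (funext fun i => ?_)))
    have hw : clamp σ.1 (hatFun f.left.toOrderHom i.succ.castSucc) = X.hom.1 i.succ.castSucc :=
      congrArg (fun h => h.1 i.succ.castSucc) (CostructuredArrow.w f)
    exact (clamp_succ_castSucc _).symm.trans
      ((congrArg (clamp _) (hatFun_succ_castSucc _ i)).symm.trans hw)

/-- The functor `J : SimplexCategory ⥤ E` is initial: for every object `σ`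
of `E`, the comma category `J ↓ σ` is connected (has contractible classifying space);
equivalently, restriction along `J` preserves limits. -/
theorem stmt_14 : JJ.Initial :=
  ⟨fun σ => isConnected_of_isTerminal _ (isTerminalClampArrow σ)⟩
end
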